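/- There exist m ≥ 1, a classifier κ : {0,1}^m → {0,1}, a point v ∈ {0,1}^m, and two features i_1, i_2 ∈ F such that i_1 is irrelevant for the instance (v, κ(v)), i_2 is relevant, and |Sv(i_1)| > |Sv(i_2)| (existence of issue I2: an irrelevant feature is ranked strictly more important than a relevant feature by Shapley values). -/

import Mathlib

/-- The set of points agreeing with `v` on all features in `S`. -/
def upsilon {m : ℕ} (v : Fin m → Bool) (S : Finset (Fin m)) : Set (Fin m → Bool) :=
  {x | ∀ i ∈ S, x i = v i}

/-- Weak abductive explanation: fixing the features in `S` to their values in `v`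
forces the prediction to remain `κ v`. -/
def WAXp {m : ℕ} (κ : (Fin m → Bool) → Bool) (v : Fin m → Bool) (S : Finset (Fin m)) : Prop :=
  ∀ x ∈ upsilon v S, κ x = κ v

/-- Abductive explanation: a subset-minimal weak AXp. -/
def AXp {m : ℕ} (κ : (Fin m → Bool) → Bool) (v : Fin m → Bool) (S : Finset (Fin m)) : Prop :=
  WAXp κ v S ∧ ∀ T ⊂ S, ¬ WAXp κ v T

/-- Weak contrastive explanation: freeing the features in `S` (fixing all others
to their values in `v`) allows the prediction to change. -/
def WCXp {m : ℕ} (κ : (Fin m → Bool) → Bool) (v : Fin m → Bool) (S : Finset (Fin m)) : Prop :=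
  ∃ x : Fin m → Bool, (∀ i ∉ S, x i = v i) ∧ κ x ≠ κ v

/-- Contrastive explanation: a subset-minimal weak CXp. -/
def CXp {m : ℕ} (κ : (Fin m → Bool) → Bool) (v : Fin m → Bool) (S : Finset (Fin m)) : Prop :=
  WCXp κ v S ∧ ∀ T ⊂ S, ¬ WCXp κ v T

/-- A feature is relevant if it belongs to some AXp. -/
def Relevant {m : ℕ} (κ : (Fin m → Bool) → Bool) (v : Fin m → Bool) (i : Fin m) : Prop :=
  ∃ S, AXp κ v S ∧ i ∈ S

/-- The sufficiency function `σ`: `σ s = true` iff fixing exactly the features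
selected by `s` to their values in `v` forces the prediction `κ v` everywhere. -/
def sigmaFn {m : ℕ} (κ : (Fin m → Bool) → Bool) (v : Fin m → Bool) (s : Fin m → Bool) : Bool :=
  decide (∀ x : Fin m → Bool, (∀ i : Fin m, s i = true → x i = v i) → κ x = κ v)

/-- Average value of the classifier over the points agreeing with `v` on `S`. -/
def phi {m : ℕ} (κ : (Fin m → Bool) → Bool) (v : Fin m → Bool) (S : Finset (Fin m)) : ℚ :=
  (1 / 2 ^ (m - S.card)) *
    ∑ x ∈ Finset.univ.filter (fun x : Fin m → Bool => ∀ i ∈ S, x i = v i),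
      (if κ x = true then (1 : ℚ) else 0)

/-- The Shapley value of feature `i` for the instance `(v, κ v)`. -/
def Sv {m : ℕ} (κ : (Fin m → Bool) → Bool) (v : Fin m → Bool) (i : Fin m) : ℚ :=
  ∑ S ∈ (Finset.univ.erase i).powerset,
    ((S.card.factorial : ℚ) * ((m - S.card - 1).factorial : ℚ) / (m.factorial : ℚ)) *
      (phi κ v (insert i S) - phi κ v S)

/-! Let `κ` be true exactly at `p₁ = (1,0,1,1)` and `p₂ = (1,1,0,0)`, and `v = (1,1,1,1)`, so
`κ v = 0`. A set `S` is a WAXp iff it separates both `p₁` and `p₂` from `v`, i.e. iff `1 ∈ S` and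
`S` meets `{2, 3}`. Both points agree with `v` on feature 0, so feature 0 never helps and is
irrelevant, while `{1, 2}` is an AXp. Yet feature 0 shifts the average of `κ` (its Shapley value is
`1/12`), whereas the contributions of feature 2 cancel under the exchange of features 1 and 3 (its
Shapley value is `0`). No classifier on fewer than four features exhibits this. -/

section Explanations

variable {m : ℕ} {κ : (Fin m → Bool) → Bool} {v : Fin m → Bool}

theorem WAXp.mono {S T : Finset (Fin m)} (hS : WAXp κ v S) (h : S ⊆ T) : WAXp κ v T :=
  fun x hx => hS x fun i hi => hx i (h hi)

theorem waxp_iff_forall_exists_ne {S : Finset (Fin m)} :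
    WAXp κ v S ↔ ∀ x, κ x ≠ κ v → ∃ i ∈ S, x i ≠ v i := by
  simp only [WAXp, upsilon, Set.mem_ofPred_eq]
  refine forall_congr' fun x => not_imp_not.symm.trans ?_
  push Not
  rfl

theorem AXp.of_forall_erase {S : Finset (Fin m)} (hS : WAXp κ v S)
    (hmin : ∀ j ∈ S, ¬ WAXp κ v (S.erase j)) : AXp κ v S := by
  refine ⟨hS, fun T hT hT' => ?_⟩
  obtain ⟨j, hjS, hjT⟩ := Finset.exists_of_ssubset hT
  exact hmin j hjS (hT'.mono fun k hk => Finset.mem_erase.2 ⟨ne_of_mem_of_not_mem hk hjT, hT.1 hk⟩)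

theorem not_relevant_of_forall_ne_imp_eq {i : Fin m} (h : ∀ x, κ x ≠ κ v → x i = v i) :
    ¬ Relevant κ v i := by
  rintro ⟨S, ⟨hS, hmin⟩, hi⟩
  refine hmin (S.erase i) (Finset.erase_ssubset hi) (waxp_iff_forall_exists_ne.2 fun x hx => ?_)
  obtain ⟨j, hj, hne⟩ := waxp_iff_forall_exists_ne.1 hS x hx
  exact ⟨j, Finset.mem_erase.2 ⟨fun hji => hne (hji ▸ h x hx), hj⟩, hne⟩

end Explanations

def exampleClassifier (x : Fin 4 → Bool) : Bool :=
  decide (x = ![true, false, true, true] ∨ x = ![true, true, false, false])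

def examplePoint : Fin 4 → Bool := fun _ => true

theorem exampleClassifier_not_relevant_zero : ¬ Relevant exampleClassifier examplePoint 0 :=
  not_relevant_of_forall_ne_imp_eq (by decide)

theorem exampleClassifier_axp : AXp exampleClassifier examplePoint {1, 2} :=
  AXp.of_forall_erase (waxp_iff_forall_exists_ne.2 (by decide))
    (by simp only [waxp_iff_forall_exists_ne]; decide)

theorem exampleClassifier_sv_zero : Sv exampleClassifier examplePoint 0 = 1 / 12 := by
  decide +kernel

theorem exampleClassifier_sv_two : Sv exampleClassifier examplePoint 2 = 0 := by
  decide +kernel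

theorem stmt17 :
    ∃ (m : ℕ) (κ : (Fin m → Bool) → Bool) (v : Fin m → Bool) (i₁ i₂ : Fin m),
      1 ≤ m ∧ ¬ Relevant κ v i₁ ∧ Relevant κ v i₂ ∧ |Sv κ v i₁| > |Sv κ v i₂| := by
  refine ⟨4, exampleClassifier, examplePoint, 0, 2, by norm_num,
    exampleClassifier_not_relevant_zero, ⟨{1, 2}, exampleClassifier_axp, by simp⟩, ?_⟩
  rw [exampleClassifier_sv_zero, exampleClassifier_sv_two]
  norm_num
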